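/- arXiv:2411.14764 — 6 statements merged into one kernel-verified Lean document; each statement's English description precedes it below -/
import Mathlib

section
/- Let A ∈ M_n(ℕ) be an n×n matrix of nonnegative integers with entries a_{i,j}, and fix h ∈ [1, n-1], k ∈ [1, n]. Define A⁺ = A + E_{h,k} - E_{h+1,k} (assuming a_{h+1,k} > 0) and ℓ̂(A) = Σ_{i ≥ s, j < t} a_{i,j} a_{s,t} (sum over all quadruples (i,j,s,t) with i ≥ s and j < t). Then ℓ̂(A⁺) - ℓ̂(A) = Σ_{j < k} a_{h,j} - Σ_{j > k} a_{h+1,j}. -/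
open Finset

/-- ℓ̂(B) = Σ_{i ≥ s, j < t} b_{i,j} b_{s,t}. -/
def lhat {n : ℕ} (B : Fin n → Fin n → ℤ) : ℤ :=
  ∑ i : Fin n, ∑ j : Fin n, ∑ s : Fin n, ∑ t : Fin n,
    if s ≤ i ∧ j < t then B i j * B s t else 0

lemma quad1 {n : ℕ} (a b : Fin n) (f : Fin n → Fin n → ℤ) :
    ∑ i : Fin n, ∑ j : Fin n, ∑ s : Fin n, ∑ t : Fin n,
      (if i = a ∧ j = b then f s t else 0) = ∑ s : Fin n, ∑ t : Fin n, f s t := by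
  simp [ite_and, Finset.sum_ite_irrel, Finset.sum_ite_eq]

lemma quad2 {n : ℕ} (a b : Fin n) (g : Fin n → Fin n → ℤ) :
    ∑ i : Fin n, ∑ j : Fin n, ∑ s : Fin n, ∑ t : Fin n,
      (if s = a ∧ t = b then g i j else 0) = ∑ i : Fin n, ∑ j : Fin n, g i j := by
  simp [ite_and, Finset.sum_ite_irrel, Finset.sum_ite_eq]

/-- For A ∈ M_n(ℕ), h ∈ [1,n-1], k ∈ [1,n] with a_{h+1,k} > 0 and
A⁺ = A + E_{h,k} - E_{h+1,k}, one has
ℓ̂(A⁺) - ℓ̂(A) = Σ_{j<k} a_{h,j} - Σ_{j>k} a_{h+1,j}. -/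
theorem stmt2 (n : ℕ) (A : Fin n → Fin n → ℕ) (h : Fin n) (hh : (h : ℕ) + 1 < n)
    (k : Fin n) (hpos : 0 < A ⟨(h : ℕ) + 1, hh⟩ k) :
    let h' : Fin n := ⟨(h : ℕ) + 1, hh⟩
    let Aplus : Fin n → Fin n → ℤ := fun i j =>
      (A i j : ℤ) + (if i = h ∧ j = k then 1 else 0) - (if i = h' ∧ j = k then 1 else 0)
    lhat Aplus - lhat (fun i j => (A i j : ℤ))
      = (∑ j ∈ Finset.univ.filter (· < k), (A h j : ℤ))
        - ∑ j ∈ Finset.univ.filter (k < ·), (A h' j : ℤ) := by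
  intro h' Aplus
  set B : Fin n → Fin n → ℤ := fun i j => (A i j : ℤ) with hB
  have key : ∀ i j s t : Fin n,
      (if s ≤ i ∧ j < t then Aplus i j * Aplus s t else 0)
      - (if s ≤ i ∧ j < t then B i j * B s t else 0)
      = ((if i = h ∧ j = k then (if s ≤ h ∧ k < t then B s t else 0) else 0)
        - (if i = h' ∧ j = k then (if s ≤ h' ∧ k < t then B s t else 0) else 0))
      + ((if s = h ∧ t = k then (if h ≤ i ∧ j < k then B i j else 0) else 0)
        - (if s = h' ∧ t = k then (if h' ≤ i ∧ j < k then B i j else 0) else 0)) := by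
    intro i j s t
    simp only [Aplus, B, h']
    simp only [Fin.le_def, Fin.lt_def, Fin.ext_iff]
    split_ifs <;> try ring
    all_goals (exfalso; omega)
  have main : lhat Aplus - lhat B
      = ((∑ s : Fin n, ∑ t : Fin n, (if s ≤ h ∧ k < t then B s t else 0))
        - ∑ s : Fin n, ∑ t : Fin n, (if s ≤ h' ∧ k < t then B s t else 0))
      + ((∑ i : Fin n, ∑ j : Fin n, (if h ≤ i ∧ j < k then B i j else 0))
        - ∑ i : Fin n, ∑ j : Fin n, (if h' ≤ i ∧ j < k then B i j else 0)) := by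
    unfold lhat
    rw [← Finset.sum_sub_distrib]
    simp only [← Finset.sum_sub_distrib]
    rw [Finset.sum_congr rfl fun i _ => Finset.sum_congr rfl fun j _ =>
      Finset.sum_congr rfl fun s _ => Finset.sum_congr rfl fun t _ => key i j s t]
    simp only [Finset.sum_add_distrib, Finset.sum_sub_distrib]
    rw [quad1, quad1, quad2, quad2]
  rw [main]
  have e1 : (∑ s : Fin n, ∑ t : Fin n, (if s ≤ h ∧ k < t then B s t else 0))
      - ∑ s : Fin n, ∑ t : Fin n, (if s ≤ h' ∧ k < t then B s t else 0)
      = - ∑ s : Fin n, ∑ t : Fin n, (if s = h' ∧ k < t then B s t else 0) := by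
    rw [← Finset.sum_sub_distrib, ← Finset.sum_neg_distrib]
    refine Finset.sum_congr rfl fun s _ => ?_
    rw [← Finset.sum_sub_distrib, ← Finset.sum_neg_distrib]
    refine Finset.sum_congr rfl fun t _ => ?_
    simp only [Fin.le_def, Fin.lt_def, Fin.ext_iff, h']
    split_ifs <;> try ring
    all_goals (exfalso; omega)
  have e2 : (∑ i : Fin n, ∑ j : Fin n, (if h ≤ i ∧ j < k then B i j else 0))
      - ∑ i : Fin n, ∑ j : Fin n, (if h' ≤ i ∧ j < k then B i j else 0)
      = ∑ i : Fin n, ∑ j : Fin n, (if i = h ∧ j < k then B i j else 0) := by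
    rw [← Finset.sum_sub_distrib]
    refine Finset.sum_congr rfl fun i _ => ?_
    rw [← Finset.sum_sub_distrib]
    refine Finset.sum_congr rfl fun j _ => ?_
    simp only [Fin.le_def, Fin.lt_def, Fin.ext_iff, h']
    split_ifs <;> try ring
    all_goals (exfalso; omega)
  rw [e1, e2]
  have c1 : ∑ s : Fin n, ∑ t : Fin n, (if s = h' ∧ k < t then B s t else 0)
      = ∑ j ∈ Finset.univ.filter (k < ·), (A h' j : ℤ) := by
    simp [ite_and, Finset.sum_ite_irrel, Finset.sum_ite_eq, Finset.sum_filter, B]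
  have c2 : ∑ i : Fin n, ∑ j : Fin n, (if i = h ∧ j < k then B i j else 0)
      = ∑ j ∈ Finset.univ.filter (· < k), (A h j : ℤ) := by
    simp [ite_and, Finset.sum_ite_irrel, Finset.sum_ite_eq, Finset.sum_filter, B]
  rw [c1, c2]
  ring
end

section
/- Let A ∈ M_n(ℕ) with entries a_{i,j}, fix h ∈ [1, n-1], k ∈ [1, n] with a_{h,k} > 0, and define A⁻ = A - E_{h,k} + E_{h+1,k}. With ℓ̂(A) = Σ_{i ≥ s, j < t} a_{i,j} a_{s,t}, one has ℓ̂(A⁻) - ℓ̂(A) = -Σ_{j < k} a_{h,j} + Σ_{j > k} a_{h+1,j}. -/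
open Finset

lemma sum_point {n : ℕ} (a b : Fin n) (f : Fin n → Fin n → ℤ) :
    (∑ s : Fin n, ∑ t : Fin n, if s = a ∧ t = b then f s t else 0) = f a b := by
  rw [Finset.sum_comm]
  simp [ite_and, Finset.sum_ite_eq']

lemma pt1 {n : ℕ} {h h' i j k : Fin n} (hval : (h' : ℕ) = (h : ℕ) + 1) (x : ℤ) :
    (if h' ≤ i ∧ j < k then x else 0) - (if h ≤ i ∧ j < k then x else 0)
      = -(if i = h then (if j < k then x else 0) else 0) := by
  split_ifs
  all_goals try ring
  all_goals exfalso
  all_goals simp only [Fin.le_def, Fin.lt_def, Fin.ext_iff, not_and, not_lt, not_le] at *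
  all_goals omega

lemma pt2 {n : ℕ} {h h' s t k : Fin n} (hval : (h' : ℕ) = (h : ℕ) + 1) (x : ℤ) :
    (if s ≤ h' ∧ k < t then x else 0) - (if s ≤ h ∧ k < t then x else 0)
      = (if s = h' then (if k < t then x else 0) else 0) := by
  split_ifs
  all_goals try ring
  all_goals exfalso
  all_goals simp only [Fin.le_def, Fin.lt_def, Fin.ext_iff, not_and, not_lt, not_le] at *
  all_goals omega

/-- For A ∈ M_n(ℕ), h ∈ [1,n-1], k ∈ [1,n] with a_{h,k} > 0 and
A⁻ = A - E_{h,k} + E_{h+1,k}, one has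
ℓ̂(A⁻) - ℓ̂(A) = -Σ_{j<k} a_{h,j} + Σ_{j>k} a_{h+1,j}. -/
theorem stmt3 (n : ℕ) (A : Fin n → Fin n → ℕ) (h : Fin n) (hh : (h : ℕ) + 1 < n)
    (k : Fin n) (hpos : 0 < A h k) :
    let h' : Fin n := ⟨(h : ℕ) + 1, hh⟩
    let Aminus : Fin n → Fin n → ℤ := fun i j =>
      (A i j : ℤ) - (if i = h ∧ j = k then 1 else 0) + (if i = h' ∧ j = k then 1 else 0)
    lhat Aminus - lhat (fun i j => (A i j : ℤ))
      = -(∑ j ∈ Finset.univ.filter (· < k), (A h j : ℤ))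
        + ∑ j ∈ Finset.univ.filter (k < ·), (A h' j : ℤ) := by
  intro h' Aminus
  have hv : (h' : ℕ) = (h : ℕ) + 1 := rfl
  set D : Fin n → Fin n → ℤ := fun i j =>
    (if i = h' ∧ j = k then 1 else 0) - (if i = h ∧ j = k then 1 else 0) with hD
  have hDD : ∀ i j s t : Fin n, j < t → D i j * D s t = 0 := by
    intro i j s t hjt
    by_cases hj : j = k
    · by_cases ht : t = k
      · exact absurd (ht ▸ hj ▸ hjt) (lt_irrefl _)
      · simp [hD, ht]
    · simp [hD, hj]
  have hAm : ∀ i j, Aminus i j = (A i j : ℤ) + D i j := by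
    intro i j; simp only [Aminus, hD]; ring
  -- Step 1: split the difference into two sums
  have e1 : lhat Aminus - lhat (fun i j => (A i j : ℤ))
      = (∑ i : Fin n, ∑ j : Fin n, ∑ s : Fin n, ∑ t : Fin n,
          if s ≤ i ∧ j < t then (A i j : ℤ) * D s t else 0)
        + (∑ i : Fin n, ∑ j : Fin n, ∑ s : Fin n, ∑ t : Fin n,
          if s ≤ i ∧ j < t then D i j * (A s t : ℤ) else 0) := by
    unfold lhat
    rw [← Finset.sum_sub_distrib, ← Finset.sum_add_distrib]
    refine Finset.sum_congr rfl fun i _ => ?_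
    rw [← Finset.sum_sub_distrib, ← Finset.sum_add_distrib]
    refine Finset.sum_congr rfl fun j _ => ?_
    rw [← Finset.sum_sub_distrib, ← Finset.sum_add_distrib]
    refine Finset.sum_congr rfl fun s _ => ?_
    rw [← Finset.sum_sub_distrib, ← Finset.sum_add_distrib]
    refine Finset.sum_congr rfl fun t _ => ?_
    by_cases hc : s ≤ i ∧ j < t
    · simp only [if_pos hc]
      have h0 := hDD i j s t hc.2
      rw [hAm i j, hAm s t]
      linear_combination h0
    · simp [hc]
  rw [e1]
  -- Step 2: compute the first sum
  have eS1 : (∑ i : Fin n, ∑ j : Fin n, ∑ s : Fin n, ∑ t : Fin n,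
        if s ≤ i ∧ j < t then (A i j : ℤ) * D s t else 0)
      = -(∑ j ∈ Finset.univ.filter (· < k), (A h j : ℤ)) := by
    have step : ∀ i j : Fin n,
        (∑ s : Fin n, ∑ t : Fin n, if s ≤ i ∧ j < t then (A i j : ℤ) * D s t else 0)
        = (if h' ≤ i ∧ j < k then (A i j : ℤ) else 0)
          - (if h ≤ i ∧ j < k then (A i j : ℤ) else 0) := by
      intro i j
      have e : ∀ s t : Fin n,
          (if s ≤ i ∧ j < t then (A i j : ℤ) * D s t else 0)
          = (if s = h' ∧ t = k then (if s ≤ i ∧ j < t then (A i j : ℤ) else 0) else 0)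
            - (if s = h ∧ t = k then (if s ≤ i ∧ j < t then (A i j : ℤ) else 0) else 0) := by
        intro s t
        simp only [hD]
        split_ifs <;> ring
      simp only [e]
      simp only [Finset.sum_sub_distrib]
      rw [sum_point h' k (fun s t => if s ≤ i ∧ j < t then (A i j : ℤ) else 0),
        sum_point h k (fun s t => if s ≤ i ∧ j < t then (A i j : ℤ) else 0)]
    simp only [step]
    simp only [pt1 hv]
    simp only [Finset.sum_neg_distrib]
    rw [Finset.sum_comm]
    simp only [Finset.sum_ite_eq', Finset.mem_univ, if_true]
    rw [Finset.sum_filter]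
  -- Step 3: compute the second sum
  have eS2 : (∑ i : Fin n, ∑ j : Fin n, ∑ s : Fin n, ∑ t : Fin n,
        if s ≤ i ∧ j < t then D i j * (A s t : ℤ) else 0)
      = ∑ j ∈ Finset.univ.filter (k < ·), (A h' j : ℤ) := by
    have e0 : ∀ i j s t : Fin n,
        (if s ≤ i ∧ j < t then D i j * (A s t : ℤ) else 0)
        = (if i = h' ∧ j = k then (if s ≤ i ∧ j < t then (A s t : ℤ) else 0) else 0)
          - (if i = h ∧ j = k then (if s ≤ i ∧ j < t then (A s t : ℤ) else 0) else 0) := by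
      intro i j s t
      simp only [hD]
      split_ifs <;> ring
    have e : ∀ i j : Fin n,
        (∑ s : Fin n, ∑ t : Fin n, if s ≤ i ∧ j < t then D i j * (A s t : ℤ) else 0)
        = (if i = h' ∧ j = k then
            (∑ s : Fin n, ∑ t : Fin n, if s ≤ i ∧ j < t then (A s t : ℤ) else 0) else 0)
          - (if i = h ∧ j = k then
            (∑ s : Fin n, ∑ t : Fin n, if s ≤ i ∧ j < t then (A s t : ℤ) else 0) else 0) := by
      intro i j
      simp only [e0]
      by_cases hp' : i = h' ∧ j = k <;> by_cases hp : i = h ∧ j = k <;>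
        simp [hp', hp, Finset.sum_sub_distrib]
    simp only [e]
    simp only [Finset.sum_sub_distrib]
    rw [sum_point h' k (fun i j => ∑ s : Fin n, ∑ t : Fin n,
          if s ≤ i ∧ j < t then (A s t : ℤ) else 0),
      sum_point h k (fun i j => ∑ s : Fin n, ∑ t : Fin n,
          if s ≤ i ∧ j < t then (A s t : ℤ) else 0)]
    simp only [← Finset.sum_sub_distrib]
    rw [show (∑ s : Fin n, ∑ t : Fin n,
        ((if s ≤ h' ∧ k < t then (A s t : ℤ) else 0) - (if s ≤ h ∧ k < t then (A s t : ℤ) else 0)))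
      = ∑ s : Fin n, ∑ t : Fin n,
        (if s = h' then (if k < t then (A s t : ℤ) else 0) else 0) from
      Finset.sum_congr rfl fun s _ => Finset.sum_congr rfl fun t _ => pt2 hv _]
    rw [Finset.sum_comm]
    simp only [Finset.sum_ite_eq', Finset.mem_univ, if_true]
    rw [Finset.sum_filter]
  rw [eS1, eS2]
end

section
/- Define a preorder ⪯ on M_n(ℕ) by: B ⪯ A iff for all s < t, Σ_{i ≤ s, j ≥ t} b_{i,j} ≤ Σ_{i ≤ s, j ≥ t} a_{i,j}, and for all s > t, Σ_{i ≥ s, j ≤ t} b_{i,j} ≤ Σ_{i ≥ s, j ≤ t} a_{i,j}. Write B ≈ A if B ⪯ A and A ⪯ B, and B ≺ A if B ⪯ A but B^± ≠ A^±, where X^± denotes X with its diagonal entries replaced by zeros. Then for A ∈ M_n(ℕ) with fixed h ∈ [1, n-1] and indices j < k in [1,n] with a_{h+1,j} > 0 and a_{h+1,k} > 0, one has A + E_{h,j} - E_{h+1,j} ≺ A + E_{h,k} - E_{h+1,k}. -/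
open Finset

/-- The BLM preorder: B ⪯ A via corner sums. -/
def ble {n : ℕ} (B A : Fin n → Fin n → ℕ) : Prop :=
  (∀ s t : Fin n, s < t →
    (∑ i ∈ Finset.univ.filter (· ≤ s), ∑ j ∈ Finset.univ.filter (t ≤ ·), B i j)
      ≤ ∑ i ∈ Finset.univ.filter (· ≤ s), ∑ j ∈ Finset.univ.filter (t ≤ ·), A i j) ∧
  (∀ s t : Fin n, t < s →
    (∑ i ∈ Finset.univ.filter (s ≤ ·), ∑ j ∈ Finset.univ.filter (· ≤ t), B i j)
      ≤ ∑ i ∈ Finset.univ.filter (s ≤ ·), ∑ j ∈ Finset.univ.filter (· ≤ t), A i j)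

/-- X^±: X with its diagonal entries replaced by zeros. -/
def offDiagPart {n : ℕ} (B : Fin n → Fin n → ℕ) : Fin n → Fin n → ℕ :=
  fun i j => if i = j then 0 else B i j

/-- B ≺ A iff B ⪯ A and B^± ≠ A^±. -/
def blt {n : ℕ} (B A : Fin n → Fin n → ℕ) : Prop :=
  ble B A ∧ offDiagPart B ≠ offDiagPart A

lemma ind_sum {n : ℕ} (a b : Fin n) (S T : Finset (Fin n)) :
    ∑ i ∈ S, ∑ l ∈ T, (if i = a ∧ l = b then (1:ℕ) else 0)
      = if a ∈ S ∧ b ∈ T then 1 else 0 := by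
  simp [ite_and, Finset.sum_ite_eq']

lemma key {n : ℕ} (A : Fin n → Fin n → ℕ) (p q x : Fin n) (hpq : p ≠ q)
    (hx : 0 < A q x) (S T : Finset (Fin n)) :
    (∑ i ∈ S, ∑ l ∈ T, (A i l + (if i = p ∧ l = x then 1 else 0)
        - (if i = q ∧ l = x then 1 else 0)))
      + (if q ∈ S ∧ x ∈ T then 1 else 0)
    = (∑ i ∈ S, ∑ l ∈ T, A i l) + (if p ∈ S ∧ x ∈ T then 1 else 0) := by
  have hpt : ∀ i l, (A i l + (if i = p ∧ l = x then 1 else 0)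
      - (if i = q ∧ l = x then 1 else 0)) + (if i = q ∧ l = x then 1 else 0)
      = A i l + (if i = p ∧ l = x then 1 else 0) := by
    intro i l
    by_cases h2 : i = q ∧ l = x
    · have h1 : ¬(i = p ∧ l = x) := fun e => hpq (e.1.symm.trans h2.1)
      have hA : 1 ≤ A i l := by rw [h2.1, h2.2]; exact hx
      rw [if_neg h1, if_pos h2]
      omega
    · rw [if_neg h2]
      omega
  rw [← ind_sum q x S T, ← ind_sum p x S T, ← Finset.sum_add_distrib,
    ← Finset.sum_add_distrib]
  refine Finset.sum_congr rfl fun i _ => ?_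
  rw [← Finset.sum_add_distrib, ← Finset.sum_add_distrib]
  exact Finset.sum_congr rfl fun l _ => hpt i l

/-- If a_{h+1,j} > 0 and a_{h+1,k} > 0 with j < k, then
A + E_{h,j} - E_{h+1,j} ≺ A + E_{h,k} - E_{h+1,k}. -/
theorem stmt4 (n : ℕ) (A : Fin n → Fin n → ℕ) (h : Fin n) (hh : (h : ℕ) + 1 < n)
    (j k : Fin n) (hjk : j < k)
    (hj : 0 < A ⟨(h : ℕ) + 1, hh⟩ j) (hk : 0 < A ⟨(h : ℕ) + 1, hh⟩ k) :
    let h' : Fin n := ⟨(h : ℕ) + 1, hh⟩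
    blt
      (fun i l => A i l + (if i = h ∧ l = j then 1 else 0)
        - (if i = h' ∧ l = j then 1 else 0))
      (fun i l => A i l + (if i = h ∧ l = k then 1 else 0)
        - (if i = h' ∧ l = k then 1 else 0)) := by
  intro h'
  have hne : h ≠ h' := by
    intro e
    have : (h : ℕ) = (h : ℕ) + 1 := congrArg Fin.val e
    omega
  have hjk' : (j : ℕ) < (k : ℕ) := hjk
  have hjkne : j ≠ k := Fin.ne_of_lt hjk
  refine ⟨⟨?_, ?_⟩, ?_⟩
  · intro s t hst
    have hst' : (s : ℕ) < (t : ℕ) := hst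
    have eB := key A h h' j hne hj (Finset.univ.filter (· ≤ s))
      (Finset.univ.filter (t ≤ ·))
    have eC := key A h h' k hne hk (Finset.univ.filter (· ≤ s))
      (Finset.univ.filter (t ≤ ·))
    simp only [Finset.mem_filter, Finset.mem_univ, true_and] at eB eC
    have e1 : (h ≤ s) ↔ ((h : ℕ) ≤ (s : ℕ)) := Iff.rfl
    have e2 : (h' ≤ s) ↔ ((h : ℕ) + 1 ≤ (s : ℕ)) := Iff.rfl
    have e3 : (t ≤ j) ↔ ((t : ℕ) ≤ (j : ℕ)) := Iff.rfl
    have e4 : (t ≤ k) ↔ ((t : ℕ) ≤ (k : ℕ)) := Iff.rfl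
    simp only [e1, e2, e3, e4] at eB eC
    beta_reduce
    split_ifs at eB eC <;> omega
  · intro s t hts
    have hts' : (t : ℕ) < (s : ℕ) := hts
    have eB := key A h h' j hne hj (Finset.univ.filter (s ≤ ·))
      (Finset.univ.filter (· ≤ t))
    have eC := key A h h' k hne hk (Finset.univ.filter (s ≤ ·))
      (Finset.univ.filter (· ≤ t))
    simp only [Finset.mem_filter, Finset.mem_univ, true_and] at eB eC
    have e1 : (s ≤ h) ↔ ((s : ℕ) ≤ (h : ℕ)) := Iff.rfl
    have e2 : (s ≤ h') ↔ ((s : ℕ) ≤ (h : ℕ) + 1) := Iff.rfl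
    have e3 : (j ≤ t) ↔ ((j : ℕ) ≤ (t : ℕ)) := Iff.rfl
    have e4 : (k ≤ t) ↔ ((k : ℕ) ≤ (t : ℕ)) := Iff.rfl
    simp only [e1, e2, e3, e4] at eB eC
    beta_reduce
    split_ifs at eB eC <;> omega
  · intro heq
    by_cases hhj : h = j
    · have hhk : h ≠ k := fun e => hjkne (hhj ▸ e)
      have nb1 : ¬(h = h ∧ k = j) := fun e => hjkne e.2.symm
      have nb2 : ¬(h = h' ∧ k = j) := fun e => hne e.1
      have nc2 : ¬(h = h' ∧ k = k) := fun e => hne e.1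
      have this1 : (if h = k then 0 else
            A h k + (if h = h ∧ k = j then 1 else 0) - (if h = h' ∧ k = j then 1 else 0))
          = (if h = k then 0 else
            A h k + (if h = h ∧ k = k then 1 else 0) - (if h = h' ∧ k = k then 1 else 0)) :=
        congrFun (congrFun heq h) k
      rw [if_neg hhk, if_neg hhk, if_neg nb1, if_neg nb2,
        if_pos (show h = h ∧ k = k from ⟨rfl, rfl⟩), if_neg nc2] at this1
      omega
    · have nb1 : ¬(h = h' ∧ j = j) := fun e => hne e.1
      have nc1 : ¬(h = h ∧ j = k) := fun e => hjkne e.2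
      have nc2 : ¬(h = h' ∧ j = k) := fun e => hne e.1
      have this1 : (if h = j then 0 else
            A h j + (if h = h ∧ j = j then 1 else 0) - (if h = h' ∧ j = j then 1 else 0))
          = (if h = j then 0 else
            A h j + (if h = h ∧ j = k then 1 else 0) - (if h = h' ∧ j = k then 1 else 0)) :=
        congrFun (congrFun heq h) j
      rw [if_neg hhj, if_neg hhj, if_pos (show h = h ∧ j = j from ⟨rfl, rfl⟩),
        if_neg nb1, if_neg nc1, if_neg nc2] at this1
      omega
end

section
/- Two matrices A, B ∈ M_n(ℕ) satisfy A ⪯ B and B ⪯ A (under the preorder defined by comparing the corner sums Σ_{i ≤ s, j ≥ t} for s < t and Σ_{i ≥ s, j ≤ t} for s > t) if and only if A and B agree in all off-diagonal entries. -/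
open Finset

lemma upper_aux {n : ℕ} (A B : Fin n → Fin n → ℕ)
    (hF : ∀ s t : Fin n, s < t →
      (∑ i ∈ Iic s, ∑ j ∈ Ici t, A i j) = ∑ i ∈ Iic s, ∑ j ∈ Ici t, B i j) :
    ∀ i j : Fin n, i < j → A i j = B i j := by
  have hH : ∀ s t : Fin n, s < t →
      (∑ i ∈ Iic s, ∑ j ∈ Ioi t, A i j) = ∑ i ∈ Iic s, ∑ j ∈ Ioi t, B i j := by
    intro s t hst
    by_cases h : t.val + 1 < n
    · have he : Ioi t = Ici (⟨t.val + 1, h⟩ : Fin n) := by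
        ext x
        simp only [Finset.mem_Ioi, Finset.mem_Ici, Fin.lt_def, Fin.le_def]
        omega
      rw [he]
      exact hF s ⟨t.val + 1, h⟩ (lt_trans hst (by simp [Fin.lt_def]))
    · have he : Ioi t = (∅ : Finset (Fin n)) := by
        ext x
        simp only [Finset.mem_Ioi, Finset.notMem_empty, iff_false, not_lt, Fin.le_def]
        omega
      simp [he]
  have hG : ∀ s t : Fin n, s < t →
      (∑ i ∈ Iic s, A i t) = ∑ i ∈ Iic s, B i t := by
    intro s t hst
    have hsplit : ∀ C : Fin n → Fin n → ℕ,
        (∑ i ∈ Iic s, ∑ j ∈ Ici t, C i j)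
          = (∑ i ∈ Iic s, C i t) + ∑ i ∈ Iic s, ∑ j ∈ Ioi t, C i j := by
      intro C
      rw [← Finset.sum_add_distrib]
      apply Finset.sum_congr rfl
      intro i _
      rw [← Finset.Ioi_insert t, Finset.sum_insert (Finset.notMem_Ioi_self)]
    have h1 := hF s t hst
    rw [hsplit A, hsplit B, hH s t hst] at h1
    exact Nat.add_right_cancel h1
  intro s t hst
  have hK : (∑ i ∈ Iio s, A i t) = ∑ i ∈ Iio s, B i t := by
    by_cases h : 0 < s.val
    · have he : Iio s = Iic (⟨s.val - 1, by omega⟩ : Fin n) := by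
        ext x
        simp only [Finset.mem_Iio, Finset.mem_Iic, Fin.lt_def, Fin.le_def]
        omega
      rw [he]
      exact hG _ t (by simp only [Fin.lt_def] at hst ⊢; omega)
    · have he : Iio s = (∅ : Finset (Fin n)) := by
        ext x
        simp only [Finset.mem_Iio, Finset.notMem_empty, iff_false, not_lt, Fin.le_def]
        omega
      simp [he]
  have h1 := hG s t hst
  rw [← Finset.Iio_insert s, Finset.sum_insert (Finset.notMem_Iio_self),
    Finset.sum_insert (Finset.notMem_Iio_self), hK] at h1
  exact Nat.add_right_cancel h1

/-- A ⪯ B and B ⪯ A iff A and B agree off the diagonal. -/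
theorem stmt6 (n : ℕ) (A B : Fin n → Fin n → ℕ) :
    (ble A B ∧ ble B A) ↔ ∀ i j : Fin n, i ≠ j → A i j = B i j := by
  have hfle : ∀ s : Fin n, Finset.univ.filter (· ≤ s) = Iic s := by
    intro s; ext x; simp
  have hfge : ∀ s : Fin n, Finset.univ.filter (s ≤ ·) = Ici s := by
    intro s; ext x; simp
  constructor
  · rintro ⟨⟨hAB1, hAB2⟩, ⟨hBA1, hBA2⟩⟩
    simp only [hfle, hfge] at hAB1 hAB2 hBA1 hBA2
    intro i j hij
    rcases lt_or_gt_of_ne hij with h | h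
    · exact upper_aux A B (fun s t hst => le_antisymm (hAB1 s t hst) (hBA1 s t hst)) i j h
    · refine upper_aux (fun i j => A j i) (fun i j => B j i) ?_ j i h
      intro s t hst
      rw [Finset.sum_comm, Finset.sum_comm (s := Iic s)]
      exact le_antisymm (hAB2 t s hst) (hBA2 t s hst)
  · intro h
    have key : ∀ C D : Fin n → Fin n → ℕ, (∀ i j : Fin n, i ≠ j → C i j = D i j) → ble C D := by
      intro C D hCD
      constructor
      · intro s t hst
        apply le_of_eq
        apply Finset.sum_congr rfl; intro i hi
        apply Finset.sum_congr rfl; intro j hj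
        simp only [Finset.mem_filter] at hi hj
        exact hCD i j (ne_of_lt (lt_of_le_of_lt hi.2 (lt_of_lt_of_le hst hj.2)))
      · intro s t hst
        apply le_of_eq
        apply Finset.sum_congr rfl; intro i hi
        apply Finset.sum_congr rfl; intro j hj
        simp only [Finset.mem_filter] at hi hj
        exact hCD i j (ne_of_gt (lt_of_le_of_lt hj.2 (lt_of_lt_of_le hst hi.2)))
    exact ⟨key A B h, key B A (fun i j hij => (h i j hij).symm)⟩
end

section
/- Let w_{0,μ} be the longest element of the Young subgroup S_μ ≤ S_r for a composition μ ∈ Λ(n,r), and d_A^+ the longest element in the double coset S_{ro(A)} d_A S_{co(A)} indexed by A ∈ M_n(ℕ) with |A| = r. Then ℓ(d_A^+) - ℓ(w_{0,co(A)}) = Σ_{i ≥ s, j < t} a_{i,j} a_{s,t}. -/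
open Finset

/-- Coxeter length of a permutation of Fin r = number of inversions. -/
def permLen {r : ℕ} (w : Equiv.Perm (Fin r)) : ℕ :=
  (Finset.univ.filter (fun p : Fin r × Fin r => p.1 < p.2 ∧ w p.2 < w p.1)).card

/-- Partial sum ν_0 + ... + ν_{i-1} of a composition. -/
def tsum' {n : ℕ} (ν : Fin n → ℕ) (i : ℕ) : ℕ :=
  ∑ u ∈ Finset.univ.filter (fun u : Fin n => (u : ℕ) < i), ν u

/-- x ∈ Fin r lies in the i-th block of the composition ν. -/
def inBlock {n r : ℕ} (ν : Fin n → ℕ) (i : Fin n) (x : Fin r) : Prop :=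
  tsum' ν (i : ℕ) ≤ (x : ℕ) ∧ (x : ℕ) < tsum' ν ((i : ℕ) + 1)

instance {n r : ℕ} (ν : Fin n → ℕ) (i : Fin n) (x : Fin r) : Decidable (inBlock ν i x) :=
  inferInstanceAs (Decidable (_ ∧ _))

/-- The Young subgroup S_μ: permutations preserving each block of μ. -/
def youngSubgroup {n : ℕ} (r : ℕ) (μ : Fin n → ℕ) : Set (Equiv.Perm (Fin r)) :=
  {w | ∀ (i : Fin n) (x : Fin r), inBlock μ i x → inBlock μ i (w x)}

/-- The double coset S_{ro(A)} d_A S_{co(A)} ⊆ S_r attached to A: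
permutations w with |(block i of ro(A)) ∩ w(block j of co(A))| = a_{i,j}. -/
def doubleCoset {n : ℕ} (r : ℕ) (A : Fin n → Fin n → ℕ) : Set (Equiv.Perm (Fin r)) :=
  {w | ∀ i j : Fin n,
    (Finset.univ.filter (fun x : Fin r =>
      inBlock (fun a => ∑ b, A a b) i (w x) ∧ inBlock (fun a => ∑ b, A b a) j x)).card
      = A i j}

/-! A permutation `w` that is longest in a set of permutations closed under `w ↦ w * swap x y`
whenever `x, y` share a column block or `w x, w y` share a row block can have an ascent
`x < y`, `w x < w y` only when both blocks strictly increase, since otherwise the swap would be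
longer. The double coset is such a set, and so is `S_{co(A)}` with the column blocks in both
roles; as `w₀` preserves column blocks, its ascents are the pairs with increasing column block.
Length is the number of pairs minus the number of ascents, so `ℓ(d_A⁺) - ℓ(w₀)` counts the pairs
with increasing column block whose images do not have increasing row block, and grouping these
pairs by the cells of `A` they lie in gives the sum. -/

open Equiv

section Counting

variable {α β : Type*} [Fintype α] [Fintype β] [DecidableEq β]

theorem sum_comp_eq_sum_card_fiber_mul (φ : α → β) (F : β → ℕ) :
    ∑ x, F (φ x) = ∑ b, #{x | φ x = b} * F b := by
  rw [← Finset.sum_fiberwise' univ φ F]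
  simp [Finset.sum_const]

theorem card_filter_rel_pair (φ : α → β) (R : β → β → Prop) [DecidableRel R] :
    #{p : α × α | R (φ p.1) (φ p.2)} =
      ∑ b₁, ∑ b₂, if R b₁ b₂ then #{x | φ x = b₁} * #{x | φ x = b₂} else 0 := by
  let c b := #{x | φ x = b}
  calc #{p : α × α | R (φ p.1) (φ p.2)}
      = ∑ x, ∑ y, if R (φ x) (φ y) then 1 else 0 := by
        rw [Finset.card_filter, Fintype.sum_prod_type]
    _ = ∑ x, ∑ b₂, c b₂ * if R (φ x) b₂ then 1 else 0 :=
        Finset.sum_congr rfl fun x _ =>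
          sum_comp_eq_sum_card_fiber_mul φ (fun b₂ => if R (φ x) b₂ then 1 else 0)
    _ = ∑ b₁, c b₁ * ∑ b₂, c b₂ * if R b₁ b₂ then 1 else 0 :=
        sum_comp_eq_sum_card_fiber_mul φ (fun b₁ => ∑ b₂, c b₂ * if R b₁ b₂ then 1 else 0)
    _ = _ := by simp only [Finset.mul_sum, mul_ite, mul_one, mul_zero, c]

end Counting

theorem card_filter_lt_and_not_lt {α : Type*} [Fintype α] {n : ℕ} (A : Fin n → Fin n → ℕ)
    (f g : α → Fin n) (hA : ∀ i j, #{x | f x = i ∧ g x = j} = A i j) :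
    #{p : α × α | g p.1 < g p.2 ∧ ¬ f p.1 < f p.2} =
      ∑ i, ∑ j, ∑ s, ∑ t, if s ≤ i ∧ j < t then A i j * A s t else 0 := by
  have hcell : ∀ b : Fin n × Fin n, #{x | (f x, g x) = b} = A b.1 b.2 := fun b => by
    simpa only [Prod.ext_iff] using hA b.1 b.2
  calc #{p : α × α | g p.1 < g p.2 ∧ ¬ f p.1 < f p.2}
      = #{p : α × α | (f p.2, g p.2).1 ≤ (f p.1, g p.1).1 ∧ (f p.1, g p.1).2 < (f p.2, g p.2).2} :=
        congrArg card (filter_congr fun p _ => by rw [not_lt, and_comm])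
    _ = _ := card_filter_rel_pair (fun x => (f x, g x)) fun b₁ b₂ => b₂.1 ≤ b₁.1 ∧ b₁.2 < b₂.2
    _ = _ := by simp only [hcell, Fintype.sum_prod_type]

/-- The pairs `a < b` whose order `swap x y` reverses are `(x, y)`, `(x, z)` and `(z, y)` with
`x < z < y`. -/
theorem apply_swap_lt_apply_swap {α β : Type*} [LinearOrder α] [LinearOrder β] {w : α → β}
    {x y a b : α} (hxy : x < y) (hw : w x < w y) (hab : a < b) (hσ : swap x y b < swap x y a)
    (hinv : w b < w a ∨ (a, b) = (x, y)) : w (swap x y b) < w (swap x y a) := by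
  simp only [swap_apply_def, Prod.mk.injEq] at *
  split_ifs at * <;> subst_vars <;> grind

section Length

variable {r : ℕ}

def inversions (w : Perm (Fin r)) : Finset (Fin r × Fin r) := {p | p.1 < p.2 ∧ w p.2 < w p.1}

theorem mem_inversions {w : Perm (Fin r)} {p : Fin r × Fin r} :
    p ∈ inversions w ↔ p.1 < p.2 ∧ w p.2 < w p.1 := by
  simp [inversions]

theorem permLen_lt_permLen_mul_swap {w : Perm (Fin r)} {x y : Fin r} (hxy : x < y)
    (hw : w x < w y) : permLen w < permLen (w * swap x y) := by
  set σ := swap x y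
  let F : Fin r × Fin r → Fin r × Fin r := fun p => if σ p.1 < σ p.2 then (σ p.1, σ p.2) else p
  have hσxy : ¬ σ x < σ y := by simp [σ, hxy.le]
  have hlt : ∀ p ∈ insert (x, y) (inversions w), p.1 < p.2 := by
    simp only [mem_insert, mem_inversions]
    rintro p (rfl | hp)
    exacts [hxy, hp.1]
  calc permLen w < #(insert (x, y) (inversions w)) := by
        rw [card_insert_of_notMem (by simp [mem_inversions, hw.le])]
        exact Nat.lt_succ_self _
    _ ≤ #(inversions (w * σ)) := by
        refine card_le_card_of_injOn F (fun p hp => ?_) (fun p hp q hq hpq => ?_)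
        · have hp' := hlt p hp
          simp only [coe_insert, Set.mem_insert_iff, mem_coe, mem_inversions] at hp
          simp only [mem_coe, mem_inversions, Perm.mul_apply, F]
          split_ifs with h
          · rcases hp with rfl | hp
            · exact absurd h hσxy
            · simpa [σ, swap_apply_self] using ⟨h, hp.2⟩
          · refine ⟨hp', apply_swap_lt_apply_swap hxy hw hp' ?_ ?_⟩
            · exact lt_of_le_of_ne (not_lt.1 h) (σ.injective.ne hp'.ne')
            · exact hp.symm.imp_left And.right
        · simp only [F] at hpq
          split_ifs at hpq with hσp hσq hσq
          · exact Prod.ext_iff.2 (by simpa using hpq)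
          · subst hpq
            simp only [σ, swap_apply_self, not_lt] at hσq
            exact absurd (hlt p hp) hσq.not_gt
          · subst hpq
            simp only [σ, swap_apply_self, not_lt] at hσp
            exact absurd (hlt q hq) hσp.not_gt
          · exact hpq
    _ = permLen (w * σ) := rfl

theorem permLen_add_card_ascents (w : Perm (Fin r)) :
    permLen w + #{p : Fin r × Fin r | p.1 < p.2 ∧ w p.1 < w p.2} =
      #{p : Fin r × Fin r | p.1 < p.2} := by
  rw [← card_filter_add_card_filter_not (s := {p : Fin r × Fin r | p.1 < p.2})
    (fun p => w p.2 < w p.1), filter_filter, filter_filter]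
  refine congrArg _ (congrArg card (filter_congr fun p _ => and_congr_right fun h => ?_))
  rw [not_lt, (w.injective.ne h.ne).le_iff_lt]

end Length

section Longest

variable {n r : ℕ} {f g : Fin r → Fin n} {S : Set (Perm (Fin r))} {w : Perm (Fin r)}

theorem lt_and_lt_of_isLongest (hf : Monotone f) (hg : Monotone g)
    (hS : ∀ v ∈ S, ∀ x y, g x = g y ∨ f (v x) = f (v y) → v * swap x y ∈ S)
    (hw : w ∈ S) (hmax : ∀ v ∈ S, permLen v ≤ permLen w) {x y : Fin r} (hxy : x < y)
    (hwxy : w x < w y) : g x < g y ∧ f (w x) < f (w y) := by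
  have hne : g x ≠ g y ∧ f (w x) ≠ f (w y) := by
    rw [← not_or]
    exact fun h => (hmax _ (hS w hw x y h)).not_gt (permLen_lt_permLen_mul_swap hxy hwxy)
  exact ⟨(hg hxy.le).lt_of_ne hne.1, (hf hwxy.le).lt_of_ne hne.2⟩

theorem card_ascents_of_isLongest (hf : Monotone f) (hg : Monotone g)
    (hS : ∀ v ∈ S, ∀ x y, g x = g y ∨ f (v x) = f (v y) → v * swap x y ∈ S)
    (hw : w ∈ S) (hmax : ∀ v ∈ S, permLen v ≤ permLen w) :
    #{p : Fin r × Fin r | p.1 < p.2 ∧ w p.1 < w p.2} =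
      #{p : Fin r × Fin r | g p.1 < g p.2 ∧ f (w p.1) < f (w p.2)} := by
  refine congrArg card (filter_congr fun p _ => ⟨fun ⟨h₁, h₂⟩ => ?_, fun ⟨h₁, h₂⟩ => ?_⟩)
  · exact lt_and_lt_of_isLongest hf hg hS hw hmax h₁ h₂
  · exact ⟨hg.reflect_lt h₁, hf.reflect_lt h₂⟩

end Longest

section Blocks

variable {n r : ℕ} {ν : Fin n → ℕ}

theorem tsum'_mono (ν : Fin n → ℕ) : Monotone (tsum' ν) := fun _ _ h =>
  sum_le_sum_of_subset fun u => by simp only [mem_filter, mem_univ, true_and]; omega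

theorem tsum'_zero (ν : Fin n → ℕ) : tsum' ν 0 = 0 := by
  simp [tsum']

theorem tsum'_self (ν : Fin n → ℕ) : tsum' ν n = ∑ u, ν u := by
  simp [tsum']

theorem lt_of_inBlock_of_inBlock {i j : Fin n} {x y : Fin r} (hx : inBlock ν i x)
    (hy : inBlock ν j y) (hij : i < j) : x < y := by
  have := tsum'_mono ν (show (i : ℕ) + 1 ≤ j from hij)
  exact Fin.lt_def.2 (by have := hx.2; have := hy.1; omega)

theorem exists_inBlock (hν : ∑ u, ν u = r) (x : Fin r) : ∃ i, inBlock ν i x := by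
  have hn : (x : ℕ) < tsum' ν n := by rw [tsum'_self, hν]; exact x.isLt
  have hk : ∃ k, (x : ℕ) < tsum' ν k := ⟨n, hn⟩
  have hpos : 0 < Nat.find hk := Nat.pos_of_ne_zero fun h => by
    simpa [h, tsum'_zero] using Nat.find_spec hk
  have hle : Nat.find hk ≤ n := Nat.find_min' hk hn
  refine ⟨⟨Nat.find hk - 1, by omega⟩,
    not_lt.1 (Nat.find_min hk (m := Nat.find hk - 1) (by omega)), ?_⟩
  simpa only [Nat.sub_add_cancel hpos] using Nat.find_spec hk

noncomputable def blockOf (hν : ∑ u, ν u = r) (x : Fin r) : Fin n :=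
  (exists_inBlock hν x).choose

theorem inBlock_iff_blockOf_eq (hν : ∑ u, ν u = r) {i : Fin n} {x : Fin r} :
    inBlock ν i x ↔ blockOf hν x = i := by
  have hspec := (exists_inBlock hν x).choose_spec
  refine ⟨fun h => le_antisymm ?_ ?_, fun h => h ▸ hspec⟩
  · exact not_lt.1 fun hlt => (lt_of_inBlock_of_inBlock h hspec hlt).false
  · exact not_lt.1 fun hlt => (lt_of_inBlock_of_inBlock hspec h hlt).false

theorem blockOf_monotone (hν : ∑ u, ν u = r) : Monotone (blockOf hν) := fun x y hxy =>
  not_lt.1 fun hlt => (lt_of_inBlock_of_inBlock (exists_inBlock hν y).choose_spec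
    (exists_inBlock hν x).choose_spec hlt).not_ge hxy

theorem mem_youngSubgroup_iff (hν : ∑ u, ν u = r) {w : Perm (Fin r)} :
    w ∈ youngSubgroup r ν ↔ ∀ x, blockOf hν (w x) = blockOf hν x := by
  simp only [youngSubgroup, Set.mem_ofPred_eq, inBlock_iff_blockOf_eq hν]
  exact ⟨fun h x => h _ x rfl, fun h i x hx => (h x).trans hx⟩

theorem swap_mem_youngSubgroup (hν : ∑ u, ν u = r) {x y : Fin r}
    (h : blockOf hν x = blockOf hν y) : swap x y ∈ youngSubgroup r ν := by
  rw [mem_youngSubgroup_iff hν]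
  intro z
  rcases eq_or_ne z x with rfl | hzx
  · simpa using h.symm
  rcases eq_or_ne z y with rfl | hzy
  · simpa using h
  · rw [swap_apply_of_ne_of_ne hzx hzy]

theorem mul_mem_youngSubgroup {v w : Perm (Fin r)} (hv : v ∈ youngSubgroup r ν)
    (hw : w ∈ youngSubgroup r ν) : v * w ∈ youngSubgroup r ν :=
  fun i x hx => hv i _ (hw i x hx)

theorem mul_swap_mem_youngSubgroup (hν : ∑ u, ν u = r) {w : Perm (Fin r)}
    (hw : w ∈ youngSubgroup r ν) {x y : Fin r}
    (h : blockOf hν x = blockOf hν y ∨ blockOf hν (w x) = blockOf hν (w y)) :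
    w * swap x y ∈ youngSubgroup r ν := by
  rw [(mem_youngSubgroup_iff hν).1 hw, (mem_youngSubgroup_iff hν).1 hw, or_self] at h
  exact mul_mem_youngSubgroup hw (swap_mem_youngSubgroup hν h)

end Blocks

section DoubleCoset

variable {n r : ℕ} {A : Fin n → Fin n → ℕ} {w : Perm (Fin r)}

theorem mem_doubleCoset_iff (hro : ∑ i, ∑ j, A i j = r) (hco : ∑ j, ∑ i, A i j = r) :
    w ∈ doubleCoset r A ↔
      ∀ i j, #{x | blockOf hro (w x) = i ∧ blockOf hco x = j} = A i j := by
  simp only [doubleCoset, Set.mem_ofPred_eq, inBlock_iff_blockOf_eq hro,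
    inBlock_iff_blockOf_eq hco]

theorem mul_mem_doubleCoset_left (hro : ∑ i, ∑ j, A i j = r) {τ : Perm (Fin r)}
    (hτ : τ ∈ youngSubgroup r (fun i => ∑ j, A i j)) (hw : w ∈ doubleCoset r A) :
    τ * w ∈ doubleCoset r A := by
  intro i j
  rw [← hw i j]
  refine congrArg card (filter_congr fun x _ => ?_)
  simp only [Perm.mul_apply, inBlock_iff_blockOf_eq hro, (mem_youngSubgroup_iff hro).1 hτ]

theorem mul_mem_doubleCoset_right (hco : ∑ j, ∑ i, A i j = r) {σ : Perm (Fin r)}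
    (hσ : σ ∈ youngSubgroup r (fun j => ∑ i, A i j)) (hw : w ∈ doubleCoset r A) :
    w * σ ∈ doubleCoset r A := by
  intro i j
  rw [← hw i j, card_filter, card_filter]
  refine (Fintype.sum_congr _ _ fun x => ?_).trans (Equiv.sum_comp σ
    fun x => if inBlock (fun a => ∑ b, A a b) i (w x) ∧ inBlock (fun a => ∑ b, A b a) j x
      then 1 else 0)
  simp only [Perm.mul_apply, inBlock_iff_blockOf_eq hco, (mem_youngSubgroup_iff hco).1 hσ]

theorem mul_swap_mem_doubleCoset (hro : ∑ i, ∑ j, A i j = r) (hco : ∑ j, ∑ i, A i j = r)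
    (hw : w ∈ doubleCoset r A) {x y : Fin r}
    (h : blockOf hco x = blockOf hco y ∨ blockOf hro (w x) = blockOf hro (w y)) :
    w * swap x y ∈ doubleCoset r A := by
  rcases h with h | h
  · exact mul_mem_doubleCoset_right hco (swap_mem_youngSubgroup hco h) hw
  · rw [mul_swap_eq_swap_mul]
    exact mul_mem_doubleCoset_left hro (swap_mem_youngSubgroup hro h) hw

end DoubleCoset

/-- ℓ(d_A⁺) - ℓ(w_{0,co(A)}) = Σ_{i ≥ s, j < t} a_{i,j} a_{s,t}, where d_A⁺ is a
longest element of the double coset of A and w_{0,co(A)} a longest element of the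
Young subgroup S_{co(A)}. -/
theorem stmt17 (n r : ℕ) (A : Fin n → Fin n → ℕ) (hr : ∑ i, ∑ j, A i j = r)
    (dplus w0 : Equiv.Perm (Fin r))
    (hd1 : dplus ∈ doubleCoset r A)
    (hd2 : ∀ w ∈ doubleCoset r A, permLen w ≤ permLen dplus)
    (hw1 : w0 ∈ youngSubgroup r (fun j => ∑ i, A i j))
    (hw2 : ∀ w ∈ youngSubgroup r (fun j => ∑ i, A i j), permLen w ≤ permLen w0) :
    (permLen dplus : ℤ) - permLen w0
      = ∑ i : Fin n, ∑ j : Fin n, ∑ s : Fin n, ∑ t : Fin n,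
          if s ≤ i ∧ j < t then (A i j : ℤ) * A s t else 0 := by
  have hc : ∑ j, ∑ i, A i j = r := by rw [Finset.sum_comm, hr]
  have hd := card_ascents_of_isLongest (blockOf_monotone hr) (blockOf_monotone hc)
    (fun _ hv _ _ => mul_swap_mem_doubleCoset hr hc hv) hd1 hd2
  have hw := card_ascents_of_isLongest (blockOf_monotone hc) (blockOf_monotone hc)
    (fun _ hv _ _ => mul_swap_mem_youngSubgroup hc hv) hw1 hw2
  simp only [(mem_youngSubgroup_iff hc).1 hw1, and_self] at hw
  have hsplit := card_filter_add_card_filter_not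
    (s := {p : Fin r × Fin r | blockOf hc p.1 < blockOf hc p.2})
    (fun p => blockOf hr (dplus p.1) < blockOf hr (dplus p.2))
  rw [filter_filter, filter_filter,
    card_filter_lt_and_not_lt A _ _ ((mem_doubleCoset_iff hr hc).1 hd1)] at hsplit
  zify at hsplit
  have := permLen_add_card_ascents dplus
  have := permLen_add_card_ascents w0
  omega
end

section
/- In the symmetric group S_r, for A = (a_{i,j}) ∈ M_n(ℕ) with |A| = r, the permutation d_A defined by d_A(ã_{h-1,k} + p) = ã^r_{h,k-1} + p for all h, k with a_{h,k} > 0 and p ∈ [1, a_{h,k}] — where ã_{i,j} = Σ_{p=1}^{j-1} Σ_{u=1}^n a_{u,p} + Σ_{u=1}^i a_{u,j} is the column-reading partial sum and ã^r_{i,j} is the analogous row-reading partial sum — is a well-defined bijection of [1, r]. -/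
/-!
Think of `A` as `r` units distributed over the cells, the cell `(h, k)` holding `a_{h,k}` of them.
Reading the cells column by column, and inside a cell unit by unit, enumerates the units
bijectively by `[0, r)`, the `p`-th unit of `(h, k)` getting the number `ctil A h k + p`
(two nested instances of `finSigmaFinEquiv`). Reading row by row is column reading of the
transpose, numbering the same unit `rtil A h k + p`. So `d_A` is one enumeration composed with the
inverse of the other, extended by the identity beyond `r`, and it is unique because the column
reading reaches every number below `r`.
-/

open Finset

/-- Column-reading partial sum ã_{h-1,k} (0-based): all entries in columns < k,
plus entries in rows < h of column k. -/
def ctil {n : ℕ} (A : Fin n → Fin n → ℕ) (h k : Fin n) : ℕ :=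
  (∑ j ∈ Finset.univ.filter (· < k), ∑ u, A u j)
    + ∑ u ∈ Finset.univ.filter (· < h), A u k

/-- Row-reading partial sum ã^r_{h,k-1} (0-based): all entries in rows < h,
plus entries in columns < k of row h. -/
def rtil {n : ℕ} (A : Fin n → Fin n → ℕ) (h k : Fin n) : ℕ :=
  (∑ i ∈ Finset.univ.filter (· < h), ∑ u, A i u)
    + ∑ j ∈ Finset.univ.filter (· < k), A h j

theorem Fin.sum_castLE_eq_sum_filter_lt {M : Type*} [AddCommMonoid M] {n : ℕ} (k : Fin n)
    (f : Fin n → M) :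
    ∑ i : Fin k, f (Fin.castLE k.2.le i) = ∑ i ∈ univ.filter (· < k), f i := by
  refine sum_nbij (castLE k.2.le) (fun i _ => ?_) (castLE_injective _).injOn (fun i hi => ?_)
    (fun _ _ => rfl)
  · exact mem_filter.2 ⟨mem_univ _, Fin.lt_def.2 i.2⟩
  · exact ⟨⟨i, by simpa using hi⟩, by simp, rfl⟩

def Equiv.sigmaSigmaComm {α β : Type*} (γ : α → β → Type*) :
    (Σ a, Σ b, γ a b) ≃ Σ b, Σ a, γ a b where
  toFun x := ⟨x.2.1, x.1, x.2.2⟩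
  invFun y := ⟨y.2.1, y.1, y.2.2⟩

@[simp]
theorem Equiv.sigmaSigmaComm_apply {α β : Type*} (γ : α → β → Type*) (a : α) (b : β)
    (c : γ a b) :
    Equiv.sigmaSigmaComm γ ⟨a, b, c⟩ = ⟨b, a, c⟩ :=
  rfl

theorem Equiv.Perm.existsUnique_extend_fin {α : Type*} {r : ℕ} (e e' : α ≃ Fin r) :
    ∃! σ : Perm ℕ, (∀ x, r ≤ x → σ x = x) ∧ ∀ a, σ (e a) = e' a := by
  set σ := Perm.extendDomain (e.symm.trans e') Fin.equivSubtype
  have hσ_fix : ∀ x, r ≤ x → σ x = x := fun x hx =>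
    Perm.extendDomain_apply_not_subtype _ _ (by simpa using hx)
  have hσ : ∀ a, σ (e a) = e' a := fun a => by
    simpa using Perm.extendDomain_apply_image (e.symm.trans e') Fin.equivSubtype (e a)
  refine ⟨σ, ⟨hσ_fix, hσ⟩, fun τ ⟨hτ_fix, hτ⟩ => Equiv.ext fun x => ?_⟩
  rcases lt_or_ge x r with hx | hx
  · obtain ⟨a, rfl⟩ : ∃ a, (e a : ℕ) = x := ⟨e.symm ⟨x, hx⟩, by simp⟩
    rw [hτ, hσ]
  · rw [hτ_fix x hx, hσ_fix x hx]

def colReading {n : ℕ} (A : Fin n → Fin n → ℕ) :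
    (Σ k : Fin n, Σ h : Fin n, Fin (A h k)) ≃ Fin (∑ k, ∑ h, A h k) :=
  (Equiv.sigmaCongrRight fun _ => finSigmaFinEquiv).trans finSigmaFinEquiv

theorem colReading_apply_val {n : ℕ} (A : Fin n → Fin n → ℕ) (k h : Fin n)
    (p : Fin (A h k)) :
    (colReading A ⟨k, h, p⟩ : ℕ) = ctil A h k + p := by
  simp only [colReading, Equiv.trans_apply, Equiv.sigmaCongrRight_apply, finSigmaFinEquiv_apply]
  rw [Fin.sum_castLE_eq_sum_filter_lt k (fun j => ∑ u, A u j),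
    Fin.sum_castLE_eq_sum_filter_lt h (A · k), ctil, add_assoc]

def rowReading {n : ℕ} (A : Fin n → Fin n → ℕ) :
    (Σ h : Fin n, Σ k : Fin n, Fin (A h k)) ≃ Fin (∑ h, ∑ k, A h k) :=
  colReading fun i j => A j i

theorem rowReading_apply_val {n : ℕ} (A : Fin n → Fin n → ℕ) (h k : Fin n)
    (p : Fin (A h k)) :
    (rowReading A ⟨h, k, p⟩ : ℕ) = rtil A h k + p :=
  colReading_apply_val (fun i j => A j i) h k p

/-- The assignment d_A(ã_{h-1,k} + p) = ã^r_{h,k-1} + p (for p ranging over the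
entry a_{h,k}) is a well-defined bijection of [1,r]: there is a unique
permutation of ℕ, fixing everything ≥ r, realizing it. -/
theorem stmt18 (n r : ℕ) (A : Fin n → Fin n → ℕ) (hr : ∑ i, ∑ j, A i j = r) :
    ∃! σ : Equiv.Perm ℕ,
      (∀ x, r ≤ x → σ x = x) ∧
      (∀ (h k : Fin n) (p : ℕ), p < A h k → σ (ctil A h k + p) = rtil A h k + p) := by
  have hr_col : ∑ k, ∑ h, A h k = r := sum_comm.trans hr
  obtain ⟨σ, ⟨hσ_fix, hσ⟩, hσ_unique⟩ := Equiv.Perm.existsUnique_extend_fin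
    ((Equiv.sigmaSigmaComm _).trans ((colReading A).trans (finCongr hr_col)))
    ((rowReading A).trans (finCongr hr))
  refine ⟨σ, ⟨hσ_fix, fun h k p hp => ?_⟩, fun τ ⟨hτ_fix, hτ⟩ => hσ_unique τ ⟨hτ_fix, ?_⟩⟩
  · simpa [colReading_apply_val, rowReading_apply_val] using hσ ⟨h, k, p, hp⟩
  · rintro ⟨h, k, p⟩
    simpa [colReading_apply_val, rowReading_apply_val] using hτ h k p p.2
end
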